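/- arXiv:1706.00319 — 3 statements merged into one kernel-verified Lean document; each statement's English description precedes it below -/
import Mathlib

section
/- For β ∈ (0,1) and any real λ, the Mittag-Leffler series E_β(z) = ∑_{n=0}^∞ z^n/Γ(βn + 1) converges absolutely for every z ∈ ℝ, and the function u(t) = E_β(λ(t-a)^β) satisfies u(t) = 1 + λ · I_{a+}^β u (t) for all t ∈ [a,b], where I_{a+}^β is the Riemann–Liouville fractional integral of order β. -/
open MeasureTheory

/-- Riemann–Liouville fractional integral of order `β` based at `a`. -/
noncomputable def RL (β a : ℝ) (f : ℝ → ℝ) (t : ℝ) : ℝ :=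
  (1 / Real.Gamma β) * ∫ y in a..t, (t - y) ^ (β - 1) * f y



lemma gamma_key {β x : ℝ} (hβ0 : 0 < β) (hβ1 : β < 1) (hx : 1 ≤ x) :
    x * Real.Gamma x ≤ Real.Gamma (x + β) * (x + β) ^ (1 - β) := by
  have hx0 : (0:ℝ) < x := by linarith
  have hxβ : (0:ℝ) < x + β := by linarith
  have hΓβ : 0 < Real.Gamma (x + β) := Real.Gamma_pos_of_pos hxβ
  have h1 : Real.log (Real.Gamma (x + 1)) ≤
      β * Real.log (Real.Gamma (x + β)) + (1 - β) * Real.log (Real.Gamma (x + β + 1)) := by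
    have h := Real.convexOn_log_Gamma.2 (Set.mem_Ioi.mpr hxβ)
      (Set.mem_Ioi.mpr (by linarith : (0:ℝ) < x + β + 1)) hβ0.le (by linarith : (0:ℝ) ≤ 1 - β)
      (by ring)
    have he : β • (x + β) + (1 - β) • (x + β + 1) = x + 1 := by simp [smul_eq_mul]; ring
    rw [he] at h
    simpa [Function.comp, smul_eq_mul] using h
  rw [Real.Gamma_add_one hxβ.ne', Real.log_mul hxβ.ne' hΓβ.ne'] at h1
  have h2 : Real.log (Real.Gamma (x + 1)) ≤
      Real.log (Real.Gamma (x + β)) + (1 - β) * Real.log (x + β) := by nlinarith [h1]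
  have h3 : Real.Gamma (x + 1) ≤
      Real.Gamma (x + β) * (x + β) ^ (1 - β) := by
    rw [← Real.exp_log (Real.Gamma_pos_of_pos (by linarith : (0:ℝ) < x + 1)),
      Real.rpow_def_of_pos hxβ, ← Real.exp_log hΓβ, ← Real.exp_add]
    exact Real.exp_le_exp.mpr (by linarith [h2])
  rwa [Real.Gamma_add_one hx0.ne'] at h3

lemma ML_summable {β : ℝ} (hβ0 : 0 < β) (hβ1 : β < 1) (c : ℝ) (hc : 1 ≤ c) (z : ℝ) :
    Summable fun n : ℕ => |z ^ n / Real.Gamma (β * n + c)| := by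
  apply summable_of_ratio_norm_eventually_le (r := 1/2) (by norm_num)
  set K := (4 * |z| + 1) ^ (1/β) with hK
  have hK0 : 0 ≤ K := Real.rpow_nonneg (by positivity) _
  filter_upwards [Filter.eventually_ge_atTop ⌈K / β⌉₊] with n hn
  set x : ℝ := β * n + c with hxdef
  have hx1 : (1:ℝ) ≤ x := by
    have : (0:ℝ) ≤ β * n := by positivity
    simp only [hxdef]; linarith
  have hx0 : (0:ℝ) < x := by linarith
  have hxβ : (0:ℝ) < x + β := by linarith
  have hKx : K ≤ x + β := by
    have h1 : (K / β : ℝ) ≤ n := le_trans (Nat.le_ceil _) (Nat.cast_le.2 hn)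
    have : K ≤ β * n := by
      rw [div_le_iff₀ hβ0] at h1; linarith [h1]
    have hc0 : (0:ℝ) ≤ c := by linarith
    linarith
  set P : ℝ := (x + β) ^ β with hPdef
  set Q : ℝ := (x + β) ^ (1 - β) with hQdef
  have hQ0 : 0 < Q := Real.rpow_pos_of_pos hxβ _
  have hPQ : P * Q = x + β := by
    rw [hPdef, hQdef, ← Real.rpow_add hxβ]
    simp
  have hP : 4 * |z| + 1 ≤ P := by
    have : K ^ β ≤ (x + β) ^ β := Real.rpow_le_rpow hK0 hKx hβ0.le
    have hKβ : K ^ β = 4 * |z| + 1 := by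
      rw [hK, ← Real.rpow_mul (by positivity), one_div_mul_cancel hβ0.ne', Real.rpow_one]
    rw [hKβ] at this
    exact this.trans_eq rfl
  have hG1 : 0 < Real.Gamma x := Real.Gamma_pos_of_pos hx0
  have hG2 : 0 < Real.Gamma (x + β) := Real.Gamma_pos_of_pos hxβ
  have key := gamma_key hβ0 hβ1 hx1
  have h2 : 2 * |z| * Q ≤ x := by nlinarith [abs_nonneg z]
  have main : 2 * |z| * Real.Gamma x ≤ Real.Gamma (x + β) := by
    have h3 : (2 * |z| * Real.Gamma x) * Q ≤ Real.Gamma (x + β) * Q := by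
      nlinarith [mul_le_mul_of_nonneg_right h2 hG1.le]
    exact le_of_mul_le_mul_right h3 hQ0
  have hrw : β * (↑(n+1) : ℝ) + c = x + β := by push_cast; simp only [hxdef]; ring
  rw [hrw]
  rw [Real.norm_eq_abs, Real.norm_eq_abs, abs_abs, abs_abs, abs_div, abs_div,
    abs_of_pos hG2, abs_of_pos hG1, abs_pow, abs_pow]
  rw [show (1:ℝ)/2 * (|z| ^ n / Real.Gamma x) = |z| ^ n / (2 * Real.Gamma x) by ring]
  rw [div_le_div_iff₀ hG2 (by positivity)]
  have := mul_le_mul_of_nonneg_left main (pow_nonneg (abs_nonneg z) n)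
  calc |z| ^ (n+1) * (2 * Real.Gamma x) = |z| ^ n * (2 * |z| * Real.Gamma x) := by ring
    _ ≤ |z| ^ n * Real.Gamma (x + β) := by nlinarith [this]


lemma integrable_aux {β γ a t : ℝ} (hβ0 : 0 < β) (hγ : 0 ≤ γ) :
    IntervalIntegrable (fun y => (t - y) ^ (β - 1) * (y - a) ^ γ) volume a t := by
  have h1 : IntervalIntegrable (fun y => (t - y) ^ (β - 1)) volume a t := by
    have h := (intervalIntegral.intervalIntegrable_rpow' (a := t - a) (b := t - t) (r := β - 1)
      (by linarith)).comp_sub_left t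
    simpa using h
  exact h1.mul_continuousOn
    ((continuousOn_id.sub continuousOn_const).rpow_const fun x _ => Or.inr hγ)

lemma beta_aux {β : ℝ} (hβ0 : 0 < β) {γ : ℝ} (hγ : 0 ≤ γ) {a t : ℝ} (hat : a ≤ t) :
    ∫ y in a..t, (t - y) ^ (β - 1) * (y - a) ^ γ =
      Real.Gamma (γ + 1) * Real.Gamma β / Real.Gamma (γ + 1 + β) * (t - a) ^ (γ + β) := by
  rcases eq_or_lt_of_le hat with h | hlt
  · subst h
    simp [Real.zero_rpow (by positivity : γ + β ≠ 0)]
  have hs : (0:ℝ) < t - a := by linarith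
  have step1 : (∫ y in a..t, (t - y) ^ (β - 1) * (y - a) ^ γ)
      = ∫ x in (0:ℝ)..(t - a), x ^ γ * ((t - a) - x) ^ (β - 1) := by
    have h := intervalIntegral.integral_comp_add_right (a := 0) (b := t - a)
      (fun y => (t - y) ^ (β - 1) * (y - a) ^ γ) a
    rw [zero_add, sub_add_cancel] at h
    rw [← h]
    apply intervalIntegral.integral_congr
    intro x _
    simp only
    rw [show t - (x + a) = (t - a) - x by ring, show x + a - a = x by ring, mul_comm]
  have hbeta : Complex.betaIntegral (γ + 1) β
      = ((Real.Gamma (γ + 1) * Real.Gamma β / Real.Gamma (γ + 1 + β) : ℝ) : ℂ) := by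
    have h1 : ((γ:ℂ) + 1) = ((γ + 1 : ℝ) : ℂ) := by push_cast; ring
    have h2 : ((γ:ℂ) + 1 + (β:ℂ)) = ((γ + 1 + β : ℝ) : ℂ) := by push_cast; ring
    have h := Complex.Gamma_mul_Gamma_eq_betaIntegral (s := (γ:ℂ) + 1) (t := (β:ℂ))
      (by simp; linarith) (by simp [hβ0])
    rw [h2, h1, Complex.Gamma_ofReal, Complex.Gamma_ofReal, Complex.Gamma_ofReal] at h
    have hne : ((Real.Gamma (γ + 1 + β) : ℝ) : ℂ) ≠ 0 := by
      exact_mod_cast (Real.Gamma_pos_of_pos (by linarith : (0:ℝ) < γ + 1 + β)).ne'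
    rw [h1, Complex.ofReal_div, Complex.ofReal_mul, h, mul_div_cancel_left₀ _ hne]
  have key : ((∫ x in (0:ℝ)..(t - a), x ^ γ * ((t - a) - x) ^ (β - 1) : ℝ) : ℂ)
      = ((t - a : ℝ) : ℂ) ^ ((γ:ℂ) + 1 + β - 1) * Complex.betaIntegral (γ + 1) β := by
    rw [← Complex.betaIntegral_scaled ((γ:ℂ) + 1) β hs, ← intervalIntegral.integral_ofReal]
    apply intervalIntegral.integral_congr
    intro x hx
    rw [Set.uIcc_of_le hs.le] at hx
    simp only
    rw [Complex.ofReal_mul, Complex.ofReal_cpow hx.1, Complex.ofReal_cpow (by linarith [hx.2] : (0:ℝ) ≤ (t - a) - x)]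
    push_cast
    ring_nf
  rw [step1]
  have final : ((∫ x in (0:ℝ)..(t - a), x ^ γ * ((t - a) - x) ^ (β - 1) : ℝ) : ℂ)
      = ((Real.Gamma (γ + 1) * Real.Gamma β / Real.Gamma (γ + 1 + β) * (t - a) ^ (γ + β) : ℝ) : ℂ) := by
    rw [key, hbeta]
    rw [show ((γ:ℂ) + 1 + β - 1) = ((γ + β : ℝ) : ℂ) by push_cast; ring,
      ← Complex.ofReal_cpow hs.le]
    push_cast
    ring
  exact_mod_cast final

lemma rpow_mul_nat {x : ℝ} (hx : 0 ≤ x) (β : ℝ) (n : ℕ) : x ^ (β * n) = (x ^ β) ^ n := by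
  rw [Real.rpow_mul hx, Real.rpow_natCast]


theorem mittagLeffler_fixed_point (β a b lam : ℝ) (hβ : β ∈ Set.Ioo (0 : ℝ) 1)
    (hab : a ≤ b) :
    (∀ z : ℝ, Summable fun n : ℕ => |z ^ n / Real.Gamma (β * n + 1)|) ∧
    (∀ t ∈ Set.Icc a b,
      (∑' n : ℕ, (lam * (t - a) ^ β) ^ n / Real.Gamma (β * n + 1)) =
        1 + lam * RL β a
          (fun s => ∑' n : ℕ, (lam * (s - a) ^ β) ^ n / Real.Gamma (β * n + 1)) t) := by
  obtain ⟨hβ0, hβ1⟩ := hβ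
  refine ⟨fun z => ML_summable hβ0 hβ1 1 le_rfl z, fun t ht => ?_⟩
  have hat : a ≤ t := ht.1
  have hta : (0:ℝ) ≤ t - a := by linarith
  have hΓβ : 0 < Real.Gamma β := Real.Gamma_pos_of_pos hβ0
  set F : ℕ → ℝ → ℝ := fun n y =>
    (lam ^ n / Real.Gamma (β * n + 1)) * ((t - y) ^ (β - 1) * (y - a) ^ (β * n)) with hF
  have hG1 : ∀ n : ℕ, 0 < Real.Gamma (β * n + 1) := fun n =>
    Real.Gamma_pos_of_pos (by positivity)
  have hG2 : ∀ n : ℕ, 0 < Real.Gamma (β * n + 1 + β) := fun n =>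
    Real.Gamma_pos_of_pos (by positivity)
  have hFint : ∀ n : ℕ, IntegrableOn (F n) (Set.Ioc a t) volume := by
    intro n
    have h := (integrable_aux (a := a) (t := t) hβ0
      (by positivity : (0:ℝ) ≤ β * n)).const_mul (lam ^ n / Real.Gamma (β * n + 1))
    exact (intervalIntegrable_iff_integrableOn_Ioc_of_le hat).mp h
  have hbeta : ∀ n : ℕ, ∫ y in a..t, (t - y) ^ (β - 1) * (y - a) ^ (β * n)
      = Real.Gamma (β * n + 1) * Real.Gamma β / Real.Gamma (β * n + 1 + β)
        * (t - a) ^ (β * n + β) := fun n => beta_aux hβ0 (by positivity) hat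
  have hnorm : ∀ n : ℕ, ∫ y in Set.Ioc a t, ‖F n y‖
      = |lam ^ n / Real.Gamma (β * n + 1)| * (Real.Gamma (β * n + 1) * Real.Gamma β
        / Real.Gamma (β * n + 1 + β) * (t - a) ^ (β * n + β)) := by
    intro n
    rw [← hbeta n, ← intervalIntegral.integral_of_le hat,
      ← intervalIntegral.integral_const_mul]
    apply intervalIntegral.integral_congr
    intro y hy
    rw [Set.uIcc_of_le hat] at hy
    simp only [hF, Real.norm_eq_abs, abs_mul]
    rw [abs_of_nonneg (Real.rpow_nonneg (by linarith [hy.2] : (0:ℝ) ≤ t - y) _),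
      abs_of_nonneg (Real.rpow_nonneg (by linarith [hy.1] : (0:ℝ) ≤ y - a) _)]
  have hsum_norm : Summable fun n : ℕ => ∫ y in Set.Ioc a t, ‖F n y‖ := by
    have base := (ML_summable hβ0 hβ1 (β + 1) (by linarith) (|lam| * (t - a) ^ β)).mul_left
      (Real.Gamma β * (t - a) ^ β)
    apply base.congr
    intro n
    rw [hnorm n]
    have h1 : β * (n:ℝ) + (β + 1) = β * n + 1 + β := by ring
    rw [h1]
    rw [abs_div, abs_div, abs_pow, abs_pow, abs_of_pos (hG1 n), abs_of_pos (hG2 n),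
      abs_mul, abs_abs, abs_of_nonneg (Real.rpow_nonneg hta β), mul_pow,
      ← rpow_mul_nat hta β n, Real.rpow_add' hta (by positivity : β * (n:ℝ) + β ≠ 0)]
    field_simp
  have int_eq : (∫ y in a..t, (t - y) ^ (β - 1)
        * (∑' n : ℕ, (lam * (y - a) ^ β) ^ n / Real.Gamma (β * n + 1)))
      = ∑' n : ℕ, ∫ y in Set.Ioc a t, F n y := by
    rw [intervalIntegral.integral_of_le hat,
      MeasureTheory.integral_tsum_of_summable_integral_norm hFint hsum_norm]
    apply setIntegral_congr_fun measurableSet_Ioc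
    intro y hy
    have hy1 : (0:ℝ) ≤ y - a := by linarith [hy.1]
    dsimp only
    rw [← tsum_mul_left]
    apply tsum_congr
    intro n
    simp only [hF]
    rw [mul_pow, ← rpow_mul_nat hy1 β n]
    ring
  have hint : ∀ n : ℕ, ∫ y in Set.Ioc a t, F n y
      = lam ^ n * Real.Gamma β * (t - a) ^ (β * n + β) / Real.Gamma (β * n + 1 + β) := by
    intro n
    rw [← intervalIntegral.integral_of_le hat]
    simp only [hF]
    rw [intervalIntegral.integral_const_mul, hbeta n]
    field_simp
  have RL_val : RL β a
      (fun s => ∑' n : ℕ, (lam * (s - a) ^ β) ^ n / Real.Gamma (β * n + 1)) t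
      = ∑' n : ℕ, lam ^ n * ((t - a) ^ β) ^ (n + 1) / Real.Gamma (β * ((n:ℝ) + 1) + 1) := by
    rw [RL, int_eq, ← tsum_mul_left]
    apply tsum_congr
    intro n
    rw [hint n]
    have h1 : β * (n:ℝ) + β = β * ((n:ℝ) + 1) := by ring
    have h2 : β * (n:ℝ) + 1 + β = β * ((n:ℝ) + 1) + 1 := by ring
    rw [h1, h2, show β * ((n:ℝ) + 1) = β * ((n + 1 : ℕ) : ℝ) by push_cast; ring,
      rpow_mul_nat hta β (n + 1)]
    have := Real.Gamma_pos_of_pos (show (0:ℝ) < β * ((n + 1 : ℕ) : ℝ) + 1 by positivity)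
    push_cast
    field_simp
  have hgoal_sum : Summable fun n : ℕ =>
      (lam * (t - a) ^ β) ^ n / Real.Gamma (β * n + 1) :=
    (ML_summable hβ0 hβ1 1 le_rfl (lam * (t - a) ^ β)).of_abs
  rw [Summable.tsum_eq_zero_add hgoal_sum, RL_val, ← tsum_mul_left]
  have h0 : (lam * (t - a) ^ β) ^ (0:ℕ) / Real.Gamma (β * (0:ℕ) + 1) = 1 := by
    simp [Real.Gamma_one]
  rw [h0]
  congr 1
  apply tsum_congr
  intro n
  rw [mul_pow]
  push_cast
  ring
end

section
/- (Weissinger fixed point theorem) Let (M, d) be a nonempty complete metric space and Ψ : M → M a map. Suppose (α_n)_{n≥0} is a sequence of nonnegative reals with ∑_{n=0}^∞ α_n < ∞ such that d(Ψⁿ u, Ψⁿ v) ≤ α_n d(u, v) for all u, v ∈ M and all n ≥ 0. Then Ψ has a unique fixed point u* ∈ M, and for every u ∈ M, Ψⁿ u → u* with d(Ψⁿ u, u*) ≤ (∑_{k=n}^∞ α_k) d(Ψ u, u). -/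
open Filter Topology

/-!
Consecutive iterates satisfy `d(Ψⁿ u, Ψⁿ⁺¹ u) ≤ αₙ d(u, Ψ u)`, so summability of `α` makes every
orbit Cauchy, and summing the tail of these bounds gives the a priori estimate. The limit is fixed
because `Ψ` is `α₁`-Lipschitz, and it attracts every orbit because `αₙ → 0`.
-/

def WeissingerWith {M : Type*} [PseudoMetricSpace M] (α : ℕ → ℝ) (f : M → M) : Prop :=
  ∀ (n : ℕ) (u v : M), dist (f^[n] u) (f^[n] v) ≤ α n * dist u v

namespace WeissingerWith

variable {M : Type*} {α : ℕ → ℝ} {f : M → M}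

section PseudoMetricSpace

variable [PseudoMetricSpace M]

theorem lipschitzWith (hf : WeissingerWith α f) : LipschitzWith (α 1).toNNReal f :=
  LipschitzWith.of_dist_le' fun u v => by simpa using hf 1 u v

theorem dist_iterate_succ_le (hf : WeissingerWith α f) (u : M) (n : ℕ) :
    dist (f^[n] u) (f^[n + 1] u) ≤ α n * dist u (f u) := by
  simpa only [Function.iterate_succ_apply] using hf n u (f u)

theorem cauchySeq_iterate (hf : WeissingerWith α f) (hα : Summable α) (u : M) :
    CauchySeq fun n => f^[n] u :=
  cauchySeq_of_dist_le_of_summable _ (hf.dist_iterate_succ_le u) (hα.mul_right _)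

theorem tendsto_iterate_of_isFixedPt (hf : WeissingerWith α f) (hα : Tendsto α atTop (𝓝 0))
    {x : M} (hx : Function.IsFixedPt f x) (u : M) :
    Tendsto (fun n => f^[n] u) atTop (𝓝 x) := by
  rw [tendsto_iff_dist_tendsto_zero]
  refine squeeze_zero (fun _ => dist_nonneg) (fun n => ?_) (by simpa using hα.mul_const (dist u x))
  simpa only [(hx.iterate n).eq] using hf n u x

theorem dist_iterate_le_tsum (hf : WeissingerWith α f) (hα : Summable α) {u x : M}
    (hx : Tendsto (fun n => f^[n] u) atTop (𝓝 x)) (n : ℕ) :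
    dist (f^[n] u) x ≤ (∑' k, α (n + k)) * dist (f u) u := by
  rw [dist_comm (f u), ← tsum_mul_right]
  exact dist_le_tsum_of_dist_le_of_tendsto _ (hf.dist_iterate_succ_le u) (hα.mul_right _) hx n

end PseudoMetricSpace

theorem exists_isFixedPt [MetricSpace M] [CompleteSpace M] [Nonempty M]
    (hf : WeissingerWith α f) (hα : Summable α) : ∃ x, Function.IsFixedPt f x := by
  obtain ⟨u⟩ := ‹Nonempty M›
  obtain ⟨x, hx⟩ := cauchySeq_tendsto_of_complete (hf.cauchySeq_iterate hα u)
  exact ⟨x, isFixedPt_of_tendsto_iterate hx hf.lipschitzWith.continuous.continuousAt⟩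

end WeissingerWith

theorem weissinger_fixed_point_general {M : Type*} [MetricSpace M] [CompleteSpace M]
    [Nonempty M] (Ψ : M → M) (α : ℕ → ℝ)
    (hα_sum : Summable α)
    (hΨ : ∀ (n : ℕ) (u v : M), dist (Ψ^[n] u) (Ψ^[n] v) ≤ α n * dist u v) :
    ∃ ustar : M, Ψ ustar = ustar ∧ (∀ v : M, Ψ v = v → v = ustar) ∧
      (∀ u : M, Tendsto (fun n => Ψ^[n] u) atTop (𝓝 ustar)) ∧
      ∀ (u : M) (n : ℕ),
        dist (Ψ^[n] u) ustar ≤ (∑' k : ℕ, α (n + k)) * dist (Ψ u) u := by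
  have hΨ : WeissingerWith α Ψ := hΨ
  obtain ⟨ustar, hfix⟩ := hΨ.exists_isFixedPt hα_sum
  have hconv := hΨ.tendsto_iterate_of_isFixedPt hα_sum.tendsto_atTop_zero hfix
  refine ⟨ustar, hfix, fun v hv => ?_, hconv, fun u => hΨ.dist_iterate_le_tsum hα_sum (hconv u)⟩
  have hv_conv := hconv v
  simp only [Function.iterate_fixed hv] at hv_conv
  exact tendsto_const_nhds_iff.mp hv_conv

/-- Weissinger's fixed point theorem. -/
theorem weissinger_fixed_point {M : Type*} [MetricSpace M] [CompleteSpace M]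
    [Nonempty M] (Ψ : M → M) (α : ℕ → ℝ) (hα_nonneg : ∀ n, 0 ≤ α n)
    (hα_sum : Summable α)
    (hΨ : ∀ (n : ℕ) (u v : M), dist (Ψ^[n] u) (Ψ^[n] v) ≤ α n * dist u v) :
    ∃ ustar : M, Ψ ustar = ustar ∧ (∀ v : M, Ψ v = v → v = ustar) ∧
      (∀ u : M, Tendsto (fun n => Ψ^[n] u) atTop (𝓝 ustar)) ∧
      ∀ (u : M) (n : ℕ),
        dist (Ψ^[n] u) ustar ≤ (∑' k : ℕ, α (n + k)) * dist (Ψ u) u :=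
  weissinger_fixed_point_general Ψ α hα_sum hΨ
end

section
/- Let a < b, β ∈ (0,1), and let f ∈ C¹([a,b]). Then for t ∈ (a,b], the Caputo derivative expressed via the generator form, D_{a+*}^β f(t) = (1/Γ(−β)) ∫_0^{t-a} (f(t−r) − f(t)) r^{−1−β} dr − (f(a) − f(t))/(Γ(1−β)(t−a)^β), coincides with the classical Caputo derivative (1/Γ(1−β)) ∫_a^t (t−s)^{−β} f'(s) ds. -/
open MeasureTheory intervalIntegral

/-!
Put `g r = f (t - r) - f t`, which vanishes at `0` and is Lipschitz. Integrating
`g r * r ^ (-1 - β)` by parts against `d(-r ^ (-β) / β)` is legitimate on the whole interval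
`[0, t - a]`: the boundary term `g r * r ^ (-β) = O(r ^ (1 - β))` extends continuously by `0` to
`r = 0`, so the fundamental theorem of calculus applies without an `ε → 0` limit. The remaining
integral becomes the classical one after `s = t - r`, and `Γ(1 - β) = -β Γ(-β)` matches the
constants, the boundary term at `r = t - a` cancelling the correction term of the generator form.
-/

open Set Filter Topology

section

variable {g g' : ℝ → ℝ} {T β M : ℝ}

lemma abs_le_mul_of_hasDerivAt_of_map_zero (hg : ∀ r ∈ Icc 0 T, HasDerivAt g (g' r) r)
    (hM : ∀ r ∈ Icc 0 T, |g' r| ≤ M) (hg0 : g 0 = 0) {r : ℝ} (hr : r ∈ Icc 0 T) :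
    |g r| ≤ M * r := by
  have := (convex_Icc 0 T).norm_image_sub_le_of_norm_hasDerivWithin_le
    (fun x hx => (hg x hx).hasDerivWithinAt) hM (left_mem_Icc.2 (hr.1.trans hr.2)) hr
  simpa [hg0, abs_of_nonneg hr.1] using this

lemma intervalIntegrable_mul_rpow_neg_one_sub (hβ : β < 1) (hT : 0 ≤ T)
    (hgc : ContinuousOn g (Icc 0 T)) (hbound : ∀ r ∈ Icc 0 T, |g r| ≤ M * r) :
    IntervalIntegrable (fun r => g r * r ^ (-1 - β)) volume 0 T := by
  refine ((intervalIntegrable_rpow' (r := -β) (by linarith)).const_mul M).mono_fun' ?_ ?_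
  · rw [uIoc_of_le hT]
    exact ((hgc.mono Ioc_subset_Icc_self).aestronglyMeasurable measurableSet_Ioc).mul
      (by fun_prop)
  · rw [uIoc_of_le hT]
    filter_upwards [ae_restrict_mem measurableSet_Ioc] with r hr
    have hr0 : 0 ≤ r ^ (-1 - β) := Real.rpow_nonneg hr.1.le _
    calc ‖g r * r ^ (-1 - β)‖ = |g r| * r ^ (-1 - β) := by
          rw [Real.norm_eq_abs, abs_mul, abs_of_nonneg hr0]
      _ ≤ M * r * r ^ (-1 - β) :=
          mul_le_mul_of_nonneg_right (hbound r (Ioc_subset_Icc_self hr)) hr0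
      _ = M * r ^ (-β) := by
          rw [show -β = 1 + (-1 - β) by ring, Real.rpow_add hr.1, Real.rpow_one, mul_assoc]

lemma continuousOn_mul_rpow_neg (hβ : β < 1) (hgc : ContinuousOn g (Icc 0 T)) (hg0 : g 0 = 0)
    (hbound : ∀ r ∈ Icc 0 T, |g r| ≤ M * r) :
    ContinuousOn (fun r => g r * r ^ (-β)) (Icc 0 T) := by
  intro x hx
  rcases hx.1.eq_or_lt with rfl | hx0
  · have hsmall : ∀ r ∈ Icc 0 T, ‖g r * r ^ (-β)‖ ≤ M * r ^ (1 - β) := fun r hr => by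
      have hr0 : 0 ≤ r ^ (-β) := Real.rpow_nonneg hr.1 _
      calc ‖g r * r ^ (-β)‖ = |g r| * r ^ (-β) := by
            rw [Real.norm_eq_abs, abs_mul, abs_of_nonneg hr0]
        _ ≤ M * r * r ^ (-β) := mul_le_mul_of_nonneg_right (hbound r hr) hr0
        _ = M * r ^ (1 - β) := by
            rw [mul_assoc, ← Real.rpow_one_add' hr.1 (by linarith)]
            ring_nf
    have hlim : Tendsto (fun r : ℝ => M * r ^ (1 - β)) (𝓝[Icc 0 T] 0) (𝓝 0) := by
      have := ((Real.continuousAt_rpow_const 0 (1 - β) (Or.inr (by linarith))).tendsto.const_mul M)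
      rw [Real.zero_rpow (by linarith), mul_zero] at this
      exact this.mono_left nhdsWithin_le_nhds
    simpa [ContinuousWithinAt, hg0] using
      squeeze_zero_norm' (eventually_nhdsWithin_of_forall hsmall) hlim
  · exact (hgc x hx).mul (Real.continuousAt_rpow_const x _ (Or.inl hx0.ne')).continuousWithinAt

theorem integral_mul_rpow_neg_one_sub_eq (hβ : β ∈ Ioo 0 1) (hT : 0 ≤ T)
    (hg : ∀ r ∈ Icc 0 T, HasDerivAt g (g' r) r) (hg' : ContinuousOn g' (Icc 0 T))
    (hg0 : g 0 = 0) :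
    ∫ r in 0..T, g r * r ^ (-1 - β) =
      ((∫ r in 0..T, g' r * r ^ (-β)) - g T * T ^ (-β)) / β := by
  obtain ⟨M, hM⟩ := isCompact_Icc.exists_bound_of_continuousOn hg'
  have hbound := fun r (hr : r ∈ Icc 0 T) => abs_le_mul_of_hasDerivAt_of_map_zero hg hM hg0 hr
  have hgc : ContinuousOn g (Icc 0 T) := fun r hr => (hg r hr).continuousAt.continuousWithinAt
  have hI₁ := intervalIntegrable_mul_rpow_neg_one_sub hβ.2 hT hgc hbound
  have hI₂ : IntervalIntegrable (fun r => g' r * r ^ (-β)) volume 0 T :=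
    (intervalIntegrable_rpow' (by linarith [hβ.2])).continuousOn_mul (by rwa [uIcc_of_le hT])
  have hderiv : ∀ r ∈ Ioo 0 T, HasDerivAt (fun r => g r * r ^ (-β))
      (g' r * r ^ (-β) - β * (g r * r ^ (-1 - β))) r := fun r hr => by
    refine ((hg r (Ioo_subset_Icc_self hr)).mul
      (Real.hasDerivAt_rpow_const (p := -β) (Or.inl hr.1.ne'))).congr_deriv ?_
    rw [show -β - 1 = -1 - β by ring]
    ring
  have hFTC := integral_eq_sub_of_hasDerivAt_of_le hT
    (continuousOn_mul_rpow_neg hβ.2 hgc hg0 hbound) hderiv (hI₂.sub (hI₁.const_mul β))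
  rw [integral_sub hI₂ (hI₁.const_mul β), intervalIntegral.integral_const_mul] at hFTC
  simp only [hg0, zero_mul, sub_zero] at hFTC
  field_simp [hβ.1.ne']
  linarith

end

theorem caputo_generator_form_eq_classical_general (a b β : ℝ)
    (hβ : β ∈ Set.Ioo (0 : ℝ) 1)
    (f f' : ℝ → ℝ) (hf : ∀ x ∈ Set.Icc a b, HasDerivAt f (f' x) x)
    (hf' : ContinuousOn f' (Set.Icc a b)) (t : ℝ) (ht : t ∈ Set.Ioc a b) :
    (1 / Real.Gamma (-β)) * (∫ r in (0:ℝ)..(t - a), (f (t - r) - f t) * r ^ (-1 - β)) -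
      (f a - f t) / (Real.Gamma (1 - β) * (t - a) ^ β) =
    (1 / Real.Gamma (1 - β)) * ∫ s in a..t, (t - s) ^ (-β) * f' s := by
  have hT : 0 < t - a := sub_pos.2 ht.1
  have hmem : ∀ r ∈ Icc 0 (t - a), t - r ∈ Icc a b := fun r hr =>
    ⟨by linarith [hr.2], by linarith [hr.1, ht.2]⟩
  have hparts := integral_mul_rpow_neg_one_sub_eq (g := fun r => f (t - r) - f t)
    (g' := fun r => -f' (t - r)) hβ hT.le
    (fun r hr => by
      simpa using ((hf _ (hmem r hr)).comp r ((hasDerivAt_id r).const_sub t)).sub_const (f t))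
    (hf'.comp (by fun_prop) hmem).neg (by simp)
  have hsubst :
      ∫ r in 0..t - a, -f' (t - r) * r ^ (-β) = -∫ s in a..t, (t - s) ^ (-β) * f' s := by
    have := integral_comp_sub_left (a := 0) (b := t - a) (fun s => (t - s) ^ (-β) * f' s) t
    simp only [sub_sub_cancel, sub_zero] at this
    rw [← this, ← intervalIntegral.integral_neg]
    congr 1 with r
    ring
  have hΓ : Real.Gamma (1 - β) = -β * Real.Gamma (-β) := by
    rw [← Real.Gamma_add_one (neg_ne_zero.2 hβ.1.ne'), neg_add_eq_sub]
  have hΓ₀ : Real.Gamma (-β) ≠ 0 := by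
    have := Real.Gamma_pos_of_pos (sub_pos.2 hβ.2)
    rw [hΓ] at this
    exact right_ne_zero_of_mul this.ne'
  simp only [sub_sub_cancel] at hparts
  rw [hsubst] at hparts
  rw [hparts, hΓ, Real.rpow_neg hT.le]
  field_simp [hβ.1.ne', (Real.rpow_pos_of_pos hT β).ne']
  ring

/-- For `f ∈ C¹([a,b])`, the generator form of the Caputo derivative of order
`β ∈ (0,1)` coincides with the classical Caputo derivative. -/
theorem caputo_generator_form_eq_classical (a b β : ℝ) (hab : a < b)
    (hβ : β ∈ Set.Ioo (0 : ℝ) 1)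
    (f f' : ℝ → ℝ) (hf : ∀ x ∈ Set.Icc a b, HasDerivAt f (f' x) x)
    (hf' : ContinuousOn f' (Set.Icc a b)) (t : ℝ) (ht : t ∈ Set.Ioc a b) :
    (1 / Real.Gamma (-β)) * (∫ r in (0:ℝ)..(t - a), (f (t - r) - f t) * r ^ (-1 - β)) -
      (f a - f t) / (Real.Gamma (1 - β) * (t - a) ^ β) =
    (1 / Real.Gamma (1 - β)) * ∫ s in a..t, (t - s) ^ (-β) * f' s :=
  caputo_generator_form_eq_classical_general a b β hβ f f' hf hf' t ht
end
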